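/- (Main Integration Lemma) Let Ψ : ℝ^D → ℝ be convex and differentiable, with differentiable convex conjugate Ψ̄, and let x₀, x₁ ∈ ℝ^D. Suppose for each t ∈ (0,1) there exists z₀(t) with (1−t)z₀(t) + t∇Ψ(z₀(t)) = (1−t)x₀ + t·x₁, and define u_t^Ψ(x_t) := ∇Ψ(z₀(t)) − z₀(t). Then ∫₀¹ ‖u_t^Ψ(x_t) − (x₁ − x₀)‖² dt = 2·[Ψ(x₀) + Ψ̄(x₁) − ⟨x₀, x₁⟩]. -/

import Mathlib

/-!
For `t ∈ (0, 1)` the point `z₀ t` maximizes `u ↦ ⟪x_t, u⟫ - (1 - t) ‖u‖² / 2 - t Ψ u`, and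
`∇Ψ (z₀ t)` maximizes `v ↦ ⟪x_t, v⟫ - (1 - t) Ψ̄ v - t ‖v‖² / 2`, both with quadratic decay
around the maximizer. Writing each objective as `(1 - t) a + t b`, the maximal value `F t` lies
above the line `s ↦ F t + (s - t) (b - a)(w t)`, so by the envelope theorem `F` is differentiable
with derivative `(b - a)(w t)`; the quadratic decay makes the maximizer, hence this derivative,
continuous in `t`. The Fenchel equality `Ψ̄ (∇Ψ z) = ⟪∇Ψ z, z⟫ - Ψ z` turns
`‖u_t - (x₁ - x₀)‖²` into the derivative of `2 F₁ - 2 F₂ + t ‖x₁ - x₀‖²`, and the integral is the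
difference of the boundary values `F₁ 0 = ‖x₀‖² / 2`, `F₁ 1 = Ψ̄ x₁`, `F₂ 0 = Ψ x₀`,
`F₂ 1 = ‖x₁‖² / 2`. The integrand is nonnegative, so it is integrable.
-/

open Set Filter Topology
open scoped RealInnerProductSpace

theorem integral_eq_sub_of_hasDerivAt_of_tendsto_of_nonneg {f f' : ℝ → ℝ} {a b fa fb : ℝ}
    (hab : a < b) (hderiv : ∀ x ∈ Ioo a b, HasDerivAt f (f' x) x)
    (hpos : ∀ x ∈ Ioo a b, 0 ≤ f' x)
    (ha : Tendsto f (𝓝[>] a) (𝓝 fa)) (hb : Tendsto f (𝓝[<] b) (𝓝 fb)) :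
    ∫ x in a..b, f' x = fb - fa := by
  refine intervalIntegral.integral_eq_sub_of_hasDerivAt_of_tendsto hab hderiv ?_ ha hb
  -- extended by its one-sided limits, `f` is continuous on `[a, b]`
  set F := Function.update (Function.update f a fa) b fb
  have hF : ∀ x ∈ Ioo a b, F x = f x := fun x hx => by
    simp [F, Function.update_of_ne hx.2.ne, Function.update_of_ne hx.1.ne']
  have Fderiv : ∀ x ∈ Ioo a b, HasDerivAt F (f' x) x := fun x hx =>
    (hderiv x hx).congr_of_eventuallyEq (eventuallyEq_of_mem (Ioo_mem_nhds hx.1 hx.2) hF)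
  have hcont : ContinuousOn F (Icc a b) := by
    rw [continuousOn_update_iff, continuousOn_update_iff, Icc_sdiff_right, Ico_sdiff_left]
    refine ⟨⟨fun z hz => (hderiv z hz).continuousAt.continuousWithinAt, ?_⟩, ?_⟩
    · exact fun _ => ha.mono_left (nhdsWithin_mono _ Ioo_subset_Ioi_self)
    · rintro -
      refine (hb.congr' ?_).mono_left (nhdsWithin_mono _ Ico_subset_Iio_self)
      filter_upwards [Ioo_mem_nhdsLT hab] with _ hz using (Function.update_of_ne hz.1.ne' _ _).symm
  refine intervalIntegral.intervalIntegrable_deriv_of_nonneg (g := F) ?_ ?_ ?_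
  · rwa [uIcc_of_le hab.le]
  · simpa [hab.le] using Fderiv
  · simpa [hab.le] using hpos

section Subgradient

variable {F S : ℝ → ℝ} {I : Set ℝ}

lemma monotoneOn_of_subgradient (hsub : ∀ s ∈ I, ∀ t ∈ I, F s + (t - s) * S s ≤ F t) :
    MonotoneOn S I := by
  intro s hs t ht hst
  rcases hst.eq_or_lt with rfl | hlt
  · rfl
  · nlinarith [hsub s hs t ht, hsub t ht s hs]

lemma hasDerivAt_of_subgradient (hI : IsOpen I)
    (hsub : ∀ s ∈ I, ∀ t ∈ I, F s + (t - s) * S s ≤ F t) {t : ℝ} (ht : t ∈ I)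
    (hS : ContinuousAt S t) : HasDerivAt F (S t) t := by
  rw [hasDerivAt_iff_isLittleO, Asymptotics.isLittleO_iff]
  intro c hc
  filter_upwards [hI.mem_nhds ht, Metric.tendsto_nhds.1 hS c hc] with t' ht' hSt'
  have hlower := hsub t ht t' ht'
  have hupper := hsub t' ht' t ht
  rw [Real.norm_eq_abs, Real.norm_eq_abs, smul_eq_mul, abs_of_nonneg (by linarith)]
  calc F t' - F t - (t' - t) * S t ≤ (t' - t) * (S t' - S t) := by linarith
    _ ≤ |t' - t| * |S t' - S t| := (le_abs_self _).trans (abs_mul _ _).le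
    _ ≤ c * |t' - t| := by
      rw [mul_comm c]
      exact mul_le_mul_of_nonneg_left (Real.dist_eq _ _ ▸ hSt').le (abs_nonneg _)

end Subgradient

section Envelope

variable {E : Type*} {a b : E → ℝ} {w : ℝ → E}

/-- The value at `w t` of `u ↦ (1 - t) * a u + t * b u`; when `w t` is a maximizer this is the
maximal value, and `envelopeSlope` is its derivative in `t`. -/
def envelope (a b : E → ℝ) (w : ℝ → E) (t : ℝ) : ℝ := (1 - t) * a (w t) + t * b (w t)

def envelopeSlope (a b : E → ℝ) (w : ℝ → E) (t : ℝ) : ℝ := b (w t) - a (w t)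

lemma interp_eq_envelope_add_mul_slope (t s : ℝ) :
    (1 - t) * a (w s) + t * b (w s) = envelope a b w s + (t - s) * envelopeSlope a b w s := by
  unfold envelope envelopeSlope; ring

lemma tendsto_envelope_nhdsGT_zero {A : ℝ}
    (hmax : ∀ t ∈ Ioo (0 : ℝ) 1, ∀ u, (1 - t) * a u + t * b u ≤ envelope a b w t)
    (ha : IsLUB (range a) A) (hb : BddAbove (range b)) :
    Tendsto (envelope a b w) (𝓝[>] 0) (𝓝 A) := by
  obtain ⟨B, hB⟩ := hb
  rw [tendsto_order]
  constructor
  · intro c hc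
    obtain ⟨_, ⟨u, rfl⟩, hcu⟩ := (lt_isLUB_iff ha).1 hc
    have hu : Tendsto (fun t : ℝ => (1 - t) * a u + t * b u) (𝓝[>] 0) (𝓝 (a u)) :=
      ((by fun_prop : Continuous fun t : ℝ => (1 - t) * a u + t * b u).tendsto' 0 _
        (by simp)).mono_left nhdsWithin_le_nhds
    filter_upwards [hu.eventually_const_lt hcu, Ioo_mem_nhdsGT zero_lt_one] with t h1 h2
    exact h1.trans_le (hmax t h2 u)
  · intro c hc
    have hAB : Tendsto (fun t : ℝ => (1 - t) * A + t * B) (𝓝[>] 0) (𝓝 A) :=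
      ((by fun_prop : Continuous fun t : ℝ => (1 - t) * A + t * B).tendsto' 0 _
        (by simp)).mono_left nhdsWithin_le_nhds
    filter_upwards [hAB.eventually_lt_const hc, Ioo_mem_nhdsGT zero_lt_one] with t h1 h2
    refine lt_of_le_of_lt ?_ h1
    have := mul_le_mul_of_nonneg_left (ha.1 ⟨w t, rfl⟩) (sub_nonneg.2 h2.2.le)
    have := mul_le_mul_of_nonneg_left (hB ⟨w t, rfl⟩) h2.1.le
    unfold envelope
    linarith

lemma tendsto_envelope_nhdsLT_one {B : ℝ}
    (hmax : ∀ t ∈ Ioo (0 : ℝ) 1, ∀ u, (1 - t) * a u + t * b u ≤ envelope a b w t)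
    (ha : BddAbove (range a)) (hb : IsLUB (range b) B) :
    Tendsto (envelope a b w) (𝓝[<] 1) (𝓝 B) := by
  have hreflect : Tendsto (fun t : ℝ => 1 - t) (𝓝[<] 1) (𝓝[>] 0) := by
    refine tendsto_nhdsWithin_of_tendsto_nhds_of_eventually_within _ ?_ ?_
    · exact ((by fun_prop : Continuous fun t : ℝ => 1 - t).tendsto' 1 0 (by simp)).mono_left
        nhdsWithin_le_nhds
    · filter_upwards [self_mem_nhdsWithin] with t (ht : t < 1) using sub_pos.2 ht
  have hmax' : ∀ t ∈ Ioo (0 : ℝ) 1, ∀ u,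
      (1 - t) * b u + t * a u ≤ envelope b a (w ∘ (1 - ·)) t := by
    intro t ht u
    have := hmax (1 - t) ⟨by linarith [ht.2], by linarith [ht.1]⟩ u
    simp only [envelope, Function.comp_apply, sub_sub_cancel] at this ⊢
    linarith
  refine ((tendsto_envelope_nhdsGT_zero hmax' hb ha).comp hreflect).congr fun t => ?_
  simp only [envelope, Function.comp_apply, sub_sub_cancel]
  ring

variable [PseudoMetricSpace E] {μ : ℝ → ℝ}

def IsStrongMaximizer (a b : E → ℝ) (w : ℝ → E) (μ : ℝ → ℝ) : Prop :=
  ∀ t ∈ Ioo (0 : ℝ) 1, 0 < μ t ∧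
    ∀ u, (1 - t) * a u + t * b u + μ t / 2 * dist u (w t) ^ 2 ≤ envelope a b w t

namespace IsStrongMaximizer

lemma le_envelope (h : IsStrongMaximizer a b w μ) :
    ∀ t ∈ Ioo (0 : ℝ) 1, ∀ u, (1 - t) * a u + t * b u ≤ envelope a b w t := by
  intro t ht u
  obtain ⟨hμ, hgrowth⟩ := h t ht
  nlinarith [hgrowth u, sq_nonneg (dist u (w t))]

lemma envelope_add_le (h : IsStrongMaximizer a b w μ) :
    ∀ s ∈ Ioo (0 : ℝ) 1, ∀ t ∈ Ioo (0 : ℝ) 1,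
      envelope a b w s + (t - s) * envelopeSlope a b w s ≤ envelope a b w t := by
  intro s _ t ht
  rw [← interp_eq_envelope_add_mul_slope]
  exact h.le_envelope t ht (w s)

lemma mul_dist_sq_le (h : IsStrongMaximizer a b w μ) {t t' : ℝ} (ht : t ∈ Ioo (0 : ℝ) 1)
    (ht' : t' ∈ Ioo (0 : ℝ) 1) :
    μ t / 2 * dist (w t') (w t) ^ 2
      ≤ (t' - t) * (envelopeSlope a b w t' - envelopeSlope a b w t) := by
  have hgrowth := (h t ht).2 (w t')
  rw [interp_eq_envelope_add_mul_slope] at hgrowth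
  nlinarith [h.envelope_add_le t ht t' ht']

lemma continuousAt (h : IsStrongMaximizer a b w μ) {t : ℝ} (ht : t ∈ Ioo (0 : ℝ) 1) :
    ContinuousAt w t := by
  set S := envelopeSlope a b w
  have hμ := (h t ht).1
  obtain ⟨tm, htm, htmt⟩ : ∃ tm ∈ Ioo (0 : ℝ) 1, tm < t :=
    ⟨t / 2, ⟨by linarith [ht.1], by linarith [ht.2]⟩, by linarith [ht.1]⟩
  obtain ⟨tp, htp, http⟩ : ∃ tp ∈ Ioo (0 : ℝ) 1, t < tp :=
    ⟨(t + 1) / 2, ⟨by linarith [ht.1], by linarith [ht.2]⟩, by linarith [ht.2]⟩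
  -- the slope is monotone, hence bounded near `t`, so `dist (w t') (w t) ^ 2 = O(|t' - t|)`
  have hmono := monotoneOn_of_subgradient h.envelope_add_le
  have hbound : ∀ t' ∈ Ioo tm tp, dist (w t') (w t) ^ 2 ≤ 2 * (S tp - S tm) * |t' - t| / μ t := by
    intro t' ht'
    have ht'I : t' ∈ Ioo (0 : ℝ) 1 := ⟨htm.1.trans ht'.1, ht'.2.trans htp.2⟩
    have hS : |S t' - S t| ≤ S tp - S tm := abs_sub_le_iff.2
      ⟨by linarith [hmono ht'I htp ht'.2.le, hmono htm ht htmt.le],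
       by linarith [hmono htm ht'I ht'.1.le, hmono ht htp http.le]⟩
    rw [le_div_iff₀ hμ]
    have : μ t / 2 * dist (w t') (w t) ^ 2 ≤ |t' - t| * (S tp - S tm) :=
      calc μ t / 2 * dist (w t') (w t) ^ 2 ≤ (t' - t) * (S t' - S t) := h.mul_dist_sq_le ht ht'I
        _ ≤ |t' - t| * |S t' - S t| := (le_abs_self _).trans (abs_mul _ _).le
        _ ≤ |t' - t| * (S tp - S tm) := mul_le_mul_of_nonneg_left hS (abs_nonneg _)
    linarith
  have hlim : Tendsto (fun t' => √(2 * (S tp - S tm) * |t' - t| / μ t)) (𝓝 t) (𝓝 0) := by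
    have : Continuous fun t' => √(2 * (S tp - S tm) * |t' - t| / μ t) := by fun_prop
    simpa using this.tendsto t
  refine tendsto_iff_dist_tendsto_zero.2 (squeeze_zero' (.of_forall fun _ => dist_nonneg) ?_ hlim)
  filter_upwards [Ioo_mem_nhds htmt http] with t' ht'
  exact Real.le_sqrt_of_sq_le (hbound t' ht')

lemma hasDerivAt_envelope (h : IsStrongMaximizer a b w μ) (ha : Continuous a)
    (hb : Continuous b) {t : ℝ} (ht : t ∈ Ioo (0 : ℝ) 1) :
    HasDerivAt (envelope a b w) (envelopeSlope a b w t) t :=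
  hasDerivAt_of_subgradient isOpen_Ioo h.envelope_add_le ht
    ((hb.continuousAt.comp (h.continuousAt ht)).sub (ha.continuousAt.comp (h.continuousAt ht)))

end IsStrongMaximizer

end Envelope

section Conjugate

variable {E : Type*} [NormedAddCommGroup E] [InnerProductSpace ℝ E] {Ψ Ψc : E → ℝ} {g : E → E}

theorem convexOn_of_isLUB_conj (hconj : ∀ y, IsLUB (range fun z => ⟪y, z⟫ - Ψ z) (Ψc y)) :
    ConvexOn ℝ univ Ψc := by
  refine ⟨convex_univ, fun u _ v _ s t hs ht hst => (hconj _).2 ?_⟩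
  rintro _ ⟨z, rfl⟩
  have hu := mul_le_mul_of_nonneg_left ((hconj u).1 ⟨z, rfl⟩) hs
  have hv := mul_le_mul_of_nonneg_left ((hconj v).1 ⟨z, rfl⟩) ht
  simp only [inner_add_left, real_inner_smul_left, smul_eq_mul] at hu hv ⊢
  have : Ψ z = s * Ψ z + t * Ψ z := by rw [← add_mul, hst, one_mul]
  linarith

theorem isLUB_range_inner_sub_half_norm_sq (x : E) :
    IsLUB (range fun u => ⟪x, u⟫ - ‖u‖ ^ 2 / 2) (‖x‖ ^ 2 / 2) := by
  refine ⟨?_, fun c hc => ?_⟩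
  · rintro _ ⟨u, rfl⟩
    nlinarith [norm_sub_sq_real x u, sq_nonneg ‖x - u‖]
  · have := hc ⟨x, rfl⟩
    simp only [real_inner_self_eq_norm_sq] at this
    linarith

theorem interp_add_sq_le_of_gradient {A B : E → ℝ} {w GA GB x₀ x₁ : E} {α β t : ℝ}
    (ht₀ : 0 ≤ t) (ht₁ : t ≤ 1)
    (hA : ∀ v, A w + ⟪GA, v - w⟫ + α / 2 * ‖v - w‖ ^ 2 ≤ A v)
    (hB : ∀ v, B w + ⟪GB, v - w⟫ + β / 2 * ‖v - w‖ ^ 2 ≤ B v)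
    (hcrit : (1 - t) • GA + t • GB = (1 - t) • x₀ + t • x₁) (u : E) :
    (1 - t) * (⟪x₀, u⟫ - A u) + t * (⟪x₁, u⟫ - B u) + ((1 - t) * α + t * β) / 2 * dist u w ^ 2
      ≤ (1 - t) * (⟪x₀, w⟫ - A w) + t * (⟪x₁, w⟫ - B w) := by
  have hinner := congrArg (fun v => ⟪v, u - w⟫) hcrit
  simp only [inner_add_left, real_inner_smul_left, inner_sub_right] at hinner
  have hA' := mul_le_mul_of_nonneg_left (hA u) (sub_nonneg.2 ht₁)
  have hB' := mul_le_mul_of_nonneg_left (hB u) ht₀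
  rw [inner_sub_right, ← dist_eq_norm] at hA' hB'
  nlinarith

theorem half_norm_sq_add_inner_sub_add_half_norm_sq (u v : E) :
    ‖u‖ ^ 2 / 2 + ⟪u, v - u⟫ + 1 / 2 * ‖v - u‖ ^ 2 = ‖v‖ ^ 2 / 2 := by
  rw [norm_sub_sq_real, inner_sub_right, real_inner_self_eq_norm_sq, real_inner_comm]
  ring

theorem norm_sub_sub_sq_eq_of_fenchel (x₀ x₁ y z : E) {ψ ψc : ℝ} (hfenchel : ψc = ⟪y, z⟫ - ψ) :
    ‖(y - z) - (x₁ - x₀)‖ ^ 2 = 2 * ((⟪x₁, z⟫ - ψ) - (⟪x₀, z⟫ - ‖z‖ ^ 2 / 2))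
      - 2 * ((⟪x₁, y⟫ - ‖y‖ ^ 2 / 2) - (⟪x₀, y⟫ - ψc)) + ‖x₁ - x₀‖ ^ 2 := by
  rw [hfenchel, norm_sub_sq_real, norm_sub_sq_real y z]
  simp only [inner_sub_left, inner_sub_right, real_inner_comm z y, real_inner_comm z x₀,
    real_inner_comm z x₁, real_inner_comm y x₀, real_inner_comm y x₁]
  ring

variable [CompleteSpace E]

theorem ConvexOn.add_inner_sub_le_of_hasGradientAt {f : E → ℝ} (hf : ConvexOn ℝ univ f) {G x : E}
    (hG : HasGradientAt f G x) (y : E) : f x + ⟪G, y - x⟫ ≤ f y := by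
  set ℓ := AffineMap.lineMap (k := ℝ) x y
  have hline : ConvexOn ℝ univ (f ∘ ℓ) := by simpa using hf.comp_affineMap ℓ
  have hderiv : HasDerivAt (f ∘ ℓ) ⟪G, y - x⟫ 0 := by
    have hG' : HasFDerivAt f (InnerProductSpace.toDual ℝ E G) (ℓ 0) := by
      simpa [ℓ] using hG.hasFDerivAt
    simpa using hG'.comp_hasDerivAt 0 AffineMap.hasDerivAt_lineMap
  have := hline.le_slope_of_hasDerivAt (mem_univ 0) (mem_univ 1) zero_lt_one hderiv
  simp only [slope_def_field, Function.comp_apply, AffineMap.lineMap_apply_one,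
    AffineMap.lineMap_apply_zero, sub_zero, div_one, ℓ] at this
  linarith

theorem conj_apply_gradient (hconv : ConvexOn ℝ univ Ψ) (hg : ∀ z, HasGradientAt Ψ (g z) z)
    (hconj : ∀ y, IsLUB (range fun z => ⟪y, z⟫ - Ψ z) (Ψc y)) (u : E) :
    Ψc (g u) = ⟪g u, u⟫ - Ψ u := by
  refine le_antisymm ((hconj (g u)).2 ?_) ((hconj (g u)).1 ⟨u, rfl⟩)
  rintro _ ⟨z, rfl⟩
  have := hconv.add_inner_sub_le_of_hasGradientAt (hg u) z
  rw [inner_sub_right] at this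
  linarith

theorem isLUB_range_inner_sub_conj (hconv : ConvexOn ℝ univ Ψ) (hg : ∀ z, HasGradientAt Ψ (g z) z)
    (hconj : ∀ y, IsLUB (range fun z => ⟪y, z⟫ - Ψ z) (Ψc y)) (x : E) :
    IsLUB (range fun y => ⟪x, y⟫ - Ψc y) (Ψ x) := by
  refine ⟨?_, fun c hc => ?_⟩
  · rintro _ ⟨y, rfl⟩
    have : ⟪y, x⟫ - Ψ x ≤ Ψc y := (hconj y).1 ⟨x, rfl⟩
    rw [real_inner_comm] at this
    simp only
    linarith
  · have := hc ⟨g x, rfl⟩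
    simp only [conj_apply_gradient hconv hg hconj x, real_inner_comm x] at this
    linarith

theorem isStrongMaximizer_primal (hconv : ConvexOn ℝ univ Ψ) (hg : ∀ z, HasGradientAt Ψ (g z) z)
    {x₀ x₁ : E} {z₀ : ℝ → E}
    (hz : ∀ t ∈ Ioo (0 : ℝ) 1, (1 - t) • z₀ t + t • g (z₀ t) = (1 - t) • x₀ + t • x₁) :
    IsStrongMaximizer (fun u => ⟪x₀, u⟫ - ‖u‖ ^ 2 / 2) (fun u => ⟪x₁, u⟫ - Ψ u) z₀
      (fun t => 1 - t) := by
  intro t ht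
  refine ⟨sub_pos.2 ht.2, fun u => ?_⟩
  have := interp_add_sq_le_of_gradient (A := fun u => ‖u‖ ^ 2 / 2) (α := 1) (β := 0)
    ht.1.le ht.2.le
    (fun v => (half_norm_sq_add_inner_sub_add_half_norm_sq (z₀ t) v).le)
    (fun v => by simpa using hconv.add_inner_sub_le_of_hasGradientAt (hg (z₀ t)) v) (hz t ht) u
  simpa [envelope] using this

theorem isStrongMaximizer_dual (hconv : ConvexOn ℝ univ Ψ) (hg : ∀ z, HasGradientAt Ψ (g z) z)
    (hconj : ∀ y, IsLUB (range fun z => ⟪y, z⟫ - Ψ z) (Ψc y)) {x₀ x₁ : E} {z₀ : ℝ → E}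
    (hz : ∀ t ∈ Ioo (0 : ℝ) 1, (1 - t) • z₀ t + t • g (z₀ t) = (1 - t) • x₀ + t • x₁) :
    IsStrongMaximizer (fun v => ⟪x₀, v⟫ - Ψc v) (fun v => ⟪x₁, v⟫ - ‖v‖ ^ 2 / 2) (g ∘ z₀)
      (fun t => t) := by
  intro t ht
  refine ⟨ht.1, fun u => ?_⟩
  have hsubgrad : ∀ v, Ψc (g (z₀ t)) + ⟪z₀ t, v - g (z₀ t)⟫ ≤ Ψc v := by
    intro v
    have : ⟪v, z₀ t⟫ - Ψ (z₀ t) ≤ Ψc v := (hconj v).1 ⟨z₀ t, rfl⟩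
    rw [conj_apply_gradient hconv hg hconj, inner_sub_right, real_inner_comm v,
      real_inner_comm (g _)]
    linarith
  have := interp_add_sq_le_of_gradient (B := fun u => ‖u‖ ^ 2 / 2) (α := 0) (β := 1)
    ht.1.le ht.2.le (fun v => by simpa using hsubgrad v)
    (fun v => (half_norm_sq_add_inner_sub_add_half_norm_sq (g (z₀ t)) v).le) (hz t ht) u
  simpa [envelope] using this

end Conjugate

theorem stmt_6_general {D : ℕ} (Ψ Ψc : EuclideanSpace ℝ (Fin D) → ℝ)
    (g : EuclideanSpace ℝ (Fin D) → EuclideanSpace ℝ (Fin D))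
    (hconv : ConvexOn ℝ Set.univ Ψ)
    (hg : ∀ z, HasGradientAt Ψ (g z) z)
    (hconj : ∀ y, IsLUB (Set.range fun z => (inner ℝ y z : ℝ) - Ψ z) (Ψc y))
    (x₀ x₁ : EuclideanSpace ℝ (Fin D))
    (z₀ : ℝ → EuclideanSpace ℝ (Fin D))
    (hz : ∀ t ∈ Set.Ioo (0:ℝ) 1,
      (1 - t) • z₀ t + t • g (z₀ t) = (1 - t) • x₀ + t • x₁) :
    ∫ t in (0:ℝ)..1, ‖(g (z₀ t) - z₀ t) - (x₁ - x₀)‖ ^ 2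
      = 2 * (Ψ x₀ + Ψc x₁ - (inner ℝ x₀ x₁ : ℝ)) := by
  have hΨ : Continuous Ψ := continuous_iff_continuousAt.2 fun z => (hg z).continuousAt
  have hΨc : Continuous Ψc :=
    continuousOn_univ.1 ((convexOn_of_isLUB_conj hconj).continuousOn isOpen_univ)
  have h₁ := isStrongMaximizer_primal hconv hg hz
  have h₂ := isStrongMaximizer_dual hconv hg hconj hz
  set F₁ := envelope (fun u => ⟪x₀, u⟫ - ‖u‖ ^ 2 / 2) (fun u => ⟪x₁, u⟫ - Ψ u) z₀
  set F₂ := envelope (fun v => ⟪x₀, v⟫ - Ψc v) (fun v => ⟪x₁, v⟫ - ‖v‖ ^ 2 / 2) (g ∘ z₀)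
  have hderiv : ∀ t ∈ Ioo (0 : ℝ) 1,
      HasDerivAt (fun t => 2 * F₁ t - 2 * F₂ t + t * ‖x₁ - x₀‖ ^ 2)
      (‖(g (z₀ t) - z₀ t) - (x₁ - x₀)‖ ^ 2) t := by
    intro t ht
    rw [norm_sub_sub_sq_eq_of_fenchel x₀ x₁ _ _ (conj_apply_gradient hconv hg hconj (z₀ t))]
    exact (((h₁.hasDerivAt_envelope (by fun_prop) (by fun_prop) ht).const_mul 2).sub
      ((h₂.hasDerivAt_envelope (by fun_prop) (by fun_prop) ht).const_mul 2)).add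
      (hasDerivAt_mul_const _)
  have hlim₀ : Tendsto (fun t => 2 * F₁ t - 2 * F₂ t + t * ‖x₁ - x₀‖ ^ 2) (𝓝[>] 0)
      (𝓝 (2 * (‖x₀‖ ^ 2 / 2) - 2 * Ψ x₀ + 0 * ‖x₁ - x₀‖ ^ 2)) :=
    (((tendsto_envelope_nhdsGT_zero h₁.le_envelope (isLUB_range_inner_sub_half_norm_sq x₀)
      (hconj x₁).bddAbove).const_mul 2).sub ((tendsto_envelope_nhdsGT_zero h₂.le_envelope
      (isLUB_range_inner_sub_conj hconv hg hconj x₀)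
      (isLUB_range_inner_sub_half_norm_sq x₁).bddAbove).const_mul 2)).add
      (continuous_mul_const _).continuousWithinAt
  have hlim₁ : Tendsto (fun t => 2 * F₁ t - 2 * F₂ t + t * ‖x₁ - x₀‖ ^ 2) (𝓝[<] 1)
      (𝓝 (2 * Ψc x₁ - 2 * (‖x₁‖ ^ 2 / 2) + 1 * ‖x₁ - x₀‖ ^ 2)) :=
    (((tendsto_envelope_nhdsLT_one h₁.le_envelope
      (isLUB_range_inner_sub_half_norm_sq x₀).bddAbove (hconj x₁)).const_mul 2).sub
      ((tendsto_envelope_nhdsLT_one h₂.le_envelope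
      (isLUB_range_inner_sub_conj hconv hg hconj x₀).bddAbove
      (isLUB_range_inner_sub_half_norm_sq x₁)).const_mul 2)).add
      (continuous_mul_const _).continuousWithinAt
  rw [integral_eq_sub_of_hasDerivAt_of_tendsto_of_nonneg zero_lt_one hderiv
    (fun _ _ => sq_nonneg _) hlim₀ hlim₁, norm_sub_sq_real, real_inner_comm]
  ring

/-- Main Integration Lemma: for convex differentiable `Ψ` (gradient `g`) with
differentiable convex conjugate `Ψc` (gradient `gc`), if `z₀ t` solves
`(1−t)z₀(t) + t∇Ψ(z₀(t)) = (1−t)x₀ + tx₁` for each `t ∈ (0,1)`, then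
`∫₀¹ ‖u_t^Ψ(x_t) − (x₁−x₀)‖² dt = 2[Ψ(x₀) + Ψc(x₁) − ⟪x₀,x₁⟫]`,
where `u_t^Ψ(x_t) = ∇Ψ(z₀(t)) − z₀(t)`. -/
theorem stmt_6 {D : ℕ} (Ψ Ψc : EuclideanSpace ℝ (Fin D) → ℝ)
    (g gc : EuclideanSpace ℝ (Fin D) → EuclideanSpace ℝ (Fin D))
    (hconv : ConvexOn ℝ Set.univ Ψ)
    (hg : ∀ z, HasGradientAt Ψ (g z) z)
    (hconj : ∀ y, IsLUB (Set.range fun z => (inner ℝ y z : ℝ) - Ψ z) (Ψc y))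
    (hgc : ∀ y, HasGradientAt Ψc (gc y) y)
    (x₀ x₁ : EuclideanSpace ℝ (Fin D))
    (z₀ : ℝ → EuclideanSpace ℝ (Fin D))
    (hz : ∀ t ∈ Set.Ioo (0:ℝ) 1,
      (1 - t) • z₀ t + t • g (z₀ t) = (1 - t) • x₀ + t • x₁) :
    ∫ t in (0:ℝ)..1, ‖(g (z₀ t) - z₀ t) - (x₁ - x₀)‖ ^ 2
      = 2 * (Ψ x₀ + Ψc x₁ - (inner ℝ x₀ x₁ : ℝ)) :=
  stmt_6_general Ψ Ψc g hconv hg hconj x₀ x₁ z₀ hz
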